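/- arXiv:1510.06770 — 6 statements merged into one kernel-verified Lean document; each statement's English description precedes it below -/
import Mathlib

section
/- Let u(x) = n(n+1)/x² for a positive integer n. Then every solution of -f'' + u·f = λ·f that is meromorphic near 0 has a Laurent expansion at 0 in which the coefficients of x^(1-n), x^(3-n), ..., i.e. of all powers x^(-n+2k+1) for 0 ≤ k ≤ n-1, vanish; equivalently the expansion has the form f = a₀x^(-n) + a₁x^(-n+2) + ... + a_n x^n + O(x^(n+1)) involving only powers x^(-n+2k) up to order n. -/
/-- For `u = n(n+1)/x²`, any Laurent-series (meromorphic) solution of `-f'' + u f = λ f`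
near `0` has vanishing coefficients at the powers `x^(-n+2k+1)` for `0 ≤ k ≤ n-1`.
The coefficient identity `(-(k+2)(k+1) + n(n+1)) a_{k+2} = λ a_k` is the expansion of
the ODE in the Laurent coefficients `a : ℤ → ℂ` of `f`. -/
theorem odd_coefficients_vanish (n : ℕ) (hn : 0 < n) (lam : ℂ) (a : ℤ → ℂ)
    (hpp : ∃ N : ℤ, ∀ k : ℤ, k < N → a k = 0)
    (heq : ∀ k : ℤ,
      (-(((k : ℂ) + 2) * ((k : ℂ) + 1)) + (n : ℂ) * ((n : ℂ) + 1)) * a (k + 2) = lam * a k) :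
    ∀ k : ℕ, k ≤ n - 1 → a (-(n : ℤ) + 2 * k + 1) = 0 := by
  obtain ⟨N, hN⟩ := hpp
  have key : ∀ t : ℕ, ∀ m : ℤ, m < N + t → m ≤ (n : ℤ) - 1 → (m + n) % 2 = 1 → a m = 0 := by
    intro t
    induction t with
    | zero => intro m hm _ _; exact hN m (by simpa using hm)
    | succ t ih =>
      intro m hm hle hpar
      rcases lt_or_ge m (N + t) with h | h
      · exact ih m h hle hpar
      · have h2 : a (m - 2) = 0 := ih (m - 2) (by omega) (by omega) (by omega)
        have hrec := heq (m - 2)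
        rw [h2, mul_zero, show (m - 2 : ℤ) + 2 = m from by ring] at hrec
        have hc : (-((((m - 2 : ℤ) : ℂ) + 2) * (((m - 2 : ℤ) : ℂ) + 1)) + (n : ℂ) * ((n : ℂ) + 1))
            = ((((n : ℤ) + 1 - m) * ((n : ℤ) + m) : ℤ) : ℂ) := by push_cast; ring
        rw [hc] at hrec
        rcases mul_eq_zero.mp hrec with h0 | h0
        · exfalso
          have : (((n : ℤ) + 1 - m) * ((n : ℤ) + m) : ℤ) = 0 := by exact_mod_cast h0
          have h1 : (n : ℤ) + 1 - m ≠ 0 := by omega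
          have h2' : (n : ℤ) + m ≠ 0 := by omega
          exact (mul_ne_zero h1 h2') this
        · exact h0
  intro k hk
  set m : ℤ := -(n : ℤ) + 2 * k + 1 with hm
  have h1 : m ≤ (n : ℤ) - 1 := by omega
  have h2 : (m + n) % 2 = 1 := by omega
  exact key (m - N + 1).toNat m (by have := Int.self_le_toNat (m - N + 1); omega) h1 h2
end

section
/- Let f and g be two (possibly different) meromorphic solutions of -h'' + (n(n+1)/x² + v(x))h = λh near x = 0, where v is analytic and even to order 2n (v = Σ_{0≤q<n} c_q x^{2q} + O(x^{2n})), with eigenvalues λ₁ and λ₂ respectively. Then the product f·g has Laurent expansion at 0 with vanishing coefficient of x^(-1) (zero residue). -/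
private lemma solution_vanish (n : ℕ) (hn : 0 < n) (lam : ℂ)
    (w a : ℤ → ℂ)
    (hw2 : w (-2) = (n : ℂ) * ((n : ℂ) + 1))
    (hwlow : ∀ k : ℤ, k < -2 → w k = 0)
    (hwm1 : w (-1) = 0)
    (hweven : ∀ k : ℤ, 0 ≤ k → k < 2 * (n : ℤ) → ¬ (2 ∣ k) → w k = 0)
    (hppa : ∃ N : ℤ, ∀ k : ℤ, k < N → a k = 0)
    (heqa : ∀ k : ℤ, -(((k : ℂ) + 2) * ((k : ℂ) + 1)) * a (k + 2)
      + ∑' j : ℤ, w j * a (k - j) = lam * a k) :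
    ∀ k : ℤ, (k < -(n:ℤ) ∨ (k < (n:ℤ) ∧ ¬ (2 ∣ (k + n)))) → a k = 0 := by
  obtain ⟨N, hN⟩ := hppa
  have main : ∀ m : ℕ, ∀ k : ℤ, k < N + m →
      (k < -(n:ℤ) ∨ (k < (n:ℤ) ∧ ¬ (2 ∣ (k + n)))) → a k = 0 := by
    intro m
    induction m with
    | zero => intro k hk _; exact hN k (by omega)
    | succ m ih =>
      intro k hk hcond
      by_cases hkm : k < N + m
      · exact ih k hkm hcond
      · have hkn : k < (n:ℤ) := by
          rcases hcond with h | h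
          · omega
          · exact h.1
        have IH : ∀ k' : ℤ, k' < k →
            (k' < -(n:ℤ) ∨ (k' < (n:ℤ) ∧ ¬ (2 ∣ (k' + n)))) → a k' = 0 := by
          intro k' h1 h2; exact ih k' (by omega) h2
        have hcond2 : (k - 2 < -(n:ℤ) ∨ (k - 2 < (n:ℤ) ∧ ¬ (2 ∣ (k - 2 + n)))) := by
          rcases hcond with h | h
          · left; omega
          · right; exact ⟨by omega, by omega⟩
        have ha2 : a (k - 2) = 0 := IH (k - 2) (by omega) hcond2
        have heq := heqa (k - 2)
        have hts : (∑' j : ℤ, w j * a (k - 2 - j)) = w (-2) * a (k - 2 - (-2)) := by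
          apply tsum_eq_single
          intro j hj
          rcases lt_trichotomy j (-2) with h | h | h
          · rw [hwlow j h]; ring
          · exact absurd h hj
          · by_cases hj1 : j = -1
            · rw [hj1, hwm1]; ring
            · have hj0 : 0 ≤ j := by omega
              by_cases hjbig : j < 2 * (n:ℤ)
              · by_cases hpar : 2 ∣ j
                · have hz : a (k - 2 - j) = 0 := by
                    apply IH (k - 2 - j) (by omega)
                    rcases hcond with h | h
                    · left; omega
                    · right; exact ⟨by omega, by omega⟩
                  rw [hz]; ring
                · rw [hweven j hj0 hjbig hpar]; ring
              · have hz : a (k - 2 - j) = 0 := by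
                  apply IH (k - 2 - j) (by omega)
                  left; omega
                rw [hz]; ring
        have hs : k - 2 - (-2) = k := by ring
        have hk2 : k - 2 + 2 = k := by ring
        rw [hts, hs, hw2, hk2, ha2, mul_zero] at heq
        push_cast at heq
        have heq' : ((n:ℂ) + (k:ℂ)) * (((n:ℂ) - (k:ℂ) + 1) * a k) = 0 := by
          linear_combination heq
        have h1 : ((n:ℂ) + (k:ℂ)) ≠ 0 := by
          have h : ((n:ℤ) + k) ≠ 0 := by
            rcases hcond with h | h
            · omega
            · intro hc
              exact h.2 ⟨0, by omega⟩
          have := (Int.cast_ne_zero (α := ℂ)).mpr h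
          push_cast at this
          exact this
        have h2 : ((n:ℂ) - (k:ℂ) + 1) ≠ 0 := by
          have h : ((n:ℤ) - k + 1) ≠ 0 := by omega
          have := (Int.cast_ne_zero (α := ℂ)).mpr h
          push_cast at this
          exact this
        rcases mul_eq_zero.mp heq' with h | h
        · exact absurd h h1
        · rcases mul_eq_zero.mp h with h' | h'
          · exact absurd h' h2
          · exact h'
  intro k hcond
  exact main (k - N + 1).toNat k (by omega) hcond

/-- Let `u = n(n+1)x⁻² + Σ_{0≤q<n} c_q x^{2q} + O(x^{2n})` (potential Laurent
coefficients `w : ℤ → ℂ`, analytic apart from the `x⁻²` term and even to order `2n`),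
and let `f, g` be meromorphic local solutions of `-h'' + u h = λᵢ h` with Laurent
coefficients `a, b`.  Then the product `f·g` has zero residue at `0`:
its `x⁻¹` Laurent coefficient `Σ_j a_j b_{-1-j}` vanishes. -/
theorem residue_of_product_vanishes (n : ℕ) (hn : 0 < n) (lam₁ lam₂ : ℂ)
    (w a b : ℤ → ℂ)
    (hw2 : w (-2) = (n : ℂ) * ((n : ℂ) + 1))
    (hwlow : ∀ k : ℤ, k < -2 → w k = 0)
    (hwm1 : w (-1) = 0)
    (hweven : ∀ k : ℤ, 0 ≤ k → k < 2 * (n : ℤ) → ¬ (2 ∣ k) → w k = 0)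
    (hppa : ∃ N : ℤ, ∀ k : ℤ, k < N → a k = 0)
    (hppb : ∃ N : ℤ, ∀ k : ℤ, k < N → b k = 0)
    (heqa : ∀ k : ℤ, -(((k : ℂ) + 2) * ((k : ℂ) + 1)) * a (k + 2)
      + ∑' j : ℤ, w j * a (k - j) = lam₁ * a k)
    (heqb : ∀ k : ℤ, -(((k : ℂ) + 2) * ((k : ℂ) + 1)) * b (k + 2)
      + ∑' j : ℤ, w j * b (k - j) = lam₂ * b k) :
    ∑' j : ℤ, a j * b (-1 - j) = 0 := by
  have ha := solution_vanish n hn lam₁ w a hw2 hwlow hwm1 hweven hppa heqa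
  have hb := solution_vanish n hn lam₂ w b hw2 hwlow hwm1 hweven hppb heqb
  have hz : ∀ j : ℤ, a j * b (-1 - j) = 0 := by
    intro j
    by_cases h1 : j < -(n:ℤ)
    · rw [ha j (Or.inl h1)]; ring
    · by_cases h2 : (n:ℤ) ≤ j
      · rw [hb (-1 - j) (Or.inl (by omega))]; ring
      · by_cases hpar : 2 ∣ (j + (n:ℤ))
        · rw [hb (-1 - j) (Or.inr ⟨by omega, by omega⟩)]; ring
        · rw [ha j (Or.inr ⟨by omega, hpar⟩)]; ring
  calc ∑' j : ℤ, a j * b (-1 - j) = ∑' _ : ℤ, (0:ℂ) := tsum_congr hz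
    _ = 0 := tsum_zero
end

section
/- The residue at 0 of f² for any meromorphic solution f of -f'' + (n(n+1)/x²)f = λf is zero: the Laurent coefficient of x^(-1) in f(x)² vanishes. -/
/-- For any meromorphic solution `f` of `-f'' + (n(n+1)/x²) f = λ f` near `0` (Laurent
coefficients `a : ℤ → ℂ` with finite principal part), the residue of `f²` at `0`
vanishes: the `x⁻¹` coefficient `Σ_j a_j a_{-1-j}` of `f(x)²` is zero. -/
theorem residue_of_square_vanishes (n : ℕ) (hn : 0 < n) (lam : ℂ) (a : ℤ → ℂ)
    (hpp : ∃ N : ℤ, ∀ k : ℤ, k < N → a k = 0)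
    (heq : ∀ k : ℤ,
      (-(((k : ℂ) + 2) * ((k : ℂ) + 1)) + (n : ℂ) * ((n : ℂ) + 1)) * a (k + 2) = lam * a k) :
    ∑' j : ℤ, a j * a (-1 - j) = 0 := by
  obtain ⟨N, hN⟩ := hpp
  -- Step 1: a starting index of a nonzero chain must be n+1 or -n.
  have step : ∀ j : ℤ, a j ≠ 0 → a (j - 2) = 0 → j = (n : ℤ) + 1 ∨ j = -(n : ℤ) := by
    intro j hj h0
    have h := heq (j - 2)
    have hj2 : j - 2 + 2 = j := by ring
    rw [hj2, h0, mul_zero] at h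
    have hcoef : (-((((j - 2 : ℤ) : ℂ) + 2) * (((j - 2 : ℤ) : ℂ) + 1))
        + (n : ℂ) * ((n : ℂ) + 1)) = 0 := by
      rcases mul_eq_zero.mp h with h | h
      · exact h
      · exact absurd h hj
    have hfac : ((j : ℂ) - ((n : ℂ) + 1)) * ((j : ℂ) + (n : ℂ)) = 0 := by
      push_cast at hcoef
      linear_combination -hcoef
    rcases mul_eq_zero.mp hfac with h | h
    · left
      have : (j : ℂ) = ((n : ℤ) + 1 : ℤ) := by push_cast; linear_combination h
      exact_mod_cast this
    · right
      have : (j : ℂ) = ((-(n : ℤ) : ℤ) : ℂ) := by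
        push_cast
        linear_combination h
      exact_mod_cast this
  -- Step 2: every nonzero coefficient descends to a starting index.
  have main : ∀ j : ℤ, a j ≠ 0 →
      ∃ s : ℤ, (s = (n : ℤ) + 1 ∨ s = -(n : ℤ)) ∧ s ≤ j ∧ (2 : ℤ) ∣ (j - s) := by
    have aux : ∀ m : ℕ, ∀ j : ℤ, j ≤ N + m → a j ≠ 0 →
        ∃ s : ℤ, (s = (n : ℤ) + 1 ∨ s = -(n : ℤ)) ∧ s ≤ j ∧ (2 : ℤ) ∣ (j - s) := by
      intro m
      induction m with
      | zero =>
        intro j hjle hj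
        have hjge : N ≤ j := by
          by_contra hlt
          exact hj (hN j (by omega))
        have h0 : a (j - 2) = 0 := hN _ (by omega)
        exact ⟨j, step j hj h0, le_refl j, ⟨0, by ring⟩⟩
      | succ m ih =>
        intro j hjle hj
        by_cases h0 : a (j - 2) = 0
        · exact ⟨j, step j hj h0, le_refl j, ⟨0, by ring⟩⟩
        · have hge : N ≤ j - 2 := by
            by_contra hlt
            exact h0 (hN _ (by omega))
          obtain ⟨s, hs, hsle, hsd⟩ := ih (j - 2) (by omega) h0
          exact ⟨s, hs, by omega, by omega⟩
    intro j hj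
    have hjge : N ≤ j := by
      by_contra hlt
      exact hj (hN j (by omega))
    exact aux (j - N).toNat j (by omega) hj
  -- Step 3: each term of the residue sum vanishes.
  have hterm : ∀ j : ℤ, a j * a (-1 - j) = 0 := by
    intro j
    by_contra hne
    have hj : a j ≠ 0 := fun h => hne (by rw [h, zero_mul])
    have hj' : a (-1 - j) ≠ 0 := fun h => hne (by rw [h, mul_zero])
    obtain ⟨s, hs, hsj, hsd⟩ := main j hj
    obtain ⟨t, ht, htj, htd⟩ := main (-1 - j) hj'
    rcases hs with hs | hs <;> rcases ht with ht | ht <;> omega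
  simp only [hterm, tsum_zero]
end

section
/- For the operator L = -∂² + n(n+1)/x², the space of principal parts at 0 of meromorphic local eigenfunctions (over all λ) is exactly the span of y^(-n), y^(-n+2), ..., ending at y^(-1) if n is odd or y^(-2) if n is even; in particular its dimension equals ⌈n/2⌉. -/
/-!
Writing `u = ∑ a k • y ^ k`, the equation `(L - λ) u = 0` is the two-step recurrence
`indicial n k * a (k + 2) = λ * a k`, where `indicial n k = (n - k - 1) (n + k + 2)` vanishes
only at `k = n - 1` and `k = -n - 2`. Running the recurrence upwards from the lowest
coefficient, a negative coefficient `a k` can be nonzero only if `k` is reached from the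
indicial root `-n` in steps of `2`. Conversely, starting at `a (-n) = 1` gives for every `λ` an
eigenfunction whose principal part is `∑ j, λ ^ j c_j y ^ (-n + 2 j)` with all `c_j ≠ 0`; as
this is polynomial in `λ`, interpolation in `λ` puts every monomial `y ^ (-n + 2 j)` in the
span.
-/

open Finset Polynomial Submodule

/-- `indicial n k * a (k + 2) - λ * a k` is the coefficient of `y ^ k` in
`(L - λ) ∑ a j • y ^ j`. -/
noncomputable def indicial (n : ℕ) (k : ℤ) : ℂ :=
  -(((k : ℂ) + 2) * ((k : ℂ) + 1)) + (n : ℂ) * ((n : ℂ) + 1)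

lemma indicial_eq_zero_iff {n : ℕ} {k : ℤ} : indicial n k = 0 ↔ k = n - 1 ∨ k = -n - 2 := by
  have hfactor : indicial n k = ((n - k - 1 : ℤ) : ℂ) * ((n + k + 2 : ℤ) : ℂ) := by
    unfold indicial; push_cast; ring
  rw [hfactor, mul_eq_zero, Int.cast_eq_zero, Int.cast_eq_zero]
  omega

theorem Int.forall_of_forall_lt_of_step {P : ℤ → Prop} {d : ℕ} (hd : 0 < d) (N : ℤ)
    (hN : ∀ k < N, P k) (hstep : ∀ k, P (k - d) → P k) (k : ℤ) : P k := by
  have hbelow : ∀ m : ℕ, ∀ k < N + m, P k := by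
    intro m
    induction m with
    | zero => simpa using hN
    | succ m ih => exact fun k hk => hstep k (ih _ (by omega))
  exact hbelow (k - N + 1).toNat k (by omega)

theorem coeff_eq_zero_of_eigen {n : ℕ} {lam : ℂ} {a : ℤ → ℂ}
    (hbdd : ∃ N : ℤ, ∀ k < N, a k = 0) (hrec : ∀ k, indicial n k * a (k + 2) = lam * a k)
    {k : ℤ} (hk : k < 0) (hk' : ¬(-(n : ℤ) ≤ k ∧ (k - n) % 2 = 0)) : a k = 0 := by
  obtain ⟨N, hN⟩ := hbdd
  suffices ∀ k, k < 0 → ¬(-(n : ℤ) ≤ k ∧ (k - n) % 2 = 0) → a k = 0 from this k hk hk'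
  refine Int.forall_of_forall_lt_of_step two_pos N (fun k hk _ _ => hN k hk) fun k ih hk hk' => ?_
  push_cast at ih
  have hprev : a (k - 2) = 0 := ih (by omega) (by omega)
  have hind : indicial n (k - 2) ≠ 0 := by rw [Ne, indicial_eq_zero_iff]; omega
  have := hrec (k - 2)
  rw [sub_add_cancel, hprev, mul_zero] at this
  exact (mul_eq_zero.mp this).resolve_left hind

theorem mem_of_forall_sum_pow_smul_mem {K M : Type*} [Field K] [Infinite K] [AddCommGroup M]
    [Module K M] {U : Submodule K M} {m : ℕ} {f : ℕ → M}
    (h : ∀ t : K, ∑ i ∈ range m, t ^ i • f i ∈ U) {j : ℕ} (hj : j < m) : f j ∈ U := by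
  by_contra hf
  obtain ⟨φ, hφ, hU⟩ := U.exists_le_ker_of_notMem hf
  have hzero : ∑ i ∈ range m, C (φ (f i)) * X ^ i = 0 := Polynomial.funext fun t => by
    have ht : φ (∑ i ∈ range m, t ^ i • f i) = 0 := hU (h t)
    simpa only [map_sum, map_smul, smul_eq_mul, eval_finsetSum, eval_mul, eval_C, eval_pow,
      eval_X, eval_zero, mul_comm] using ht
  apply hφ
  simpa [finsetSum_coeff, coeff_C_mul_X_pow, hj] using congr_arg (coeff · j) hzero

theorem eq_sum_smul_single {ι R : Type*} [DecidableEq ι] [Semiring R] {s : Finset ι}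
    {p : ι → R} (hp : ∀ i ∉ s, p i = 0) : p = ∑ i ∈ s, p i • Pi.single i 1 := by
  ext k
  by_cases hk : k ∈ s <;> simp [Finset.sum_apply, Pi.single_apply, hk, hp]

theorem coe_span_range_single {ι R : Type*} [DecidableEq ι] [Semiring R] (s : Finset ι) :
    ((span R (Set.range fun i : s => (Pi.single (i : ι) (1 : R) : ι → R))) : Set (ι → R)) =
      {p | ∀ i ∉ s, p i = 0} := by
  ext p
  constructor
  · intro hp
    induction hp using Submodule.span_induction with
    | mem q hq =>
      obtain ⟨j, rfl⟩ := hq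
      exact fun i hi => Pi.single_eq_of_ne (ne_of_mem_of_not_mem j.2 hi).symm _
    | zero => exact fun _ _ => rfl
    | add q r _ _ hq hr => exact fun i hi => by simp [hq i hi, hr i hi]
    | smul c q _ hq => exact fun i hi => by simp [hq i hi]
  · intro hp
    rw [SetLike.mem_coe, eq_sum_smul_single hp]
    exact sum_mem fun i hi => smul_mem _ _ (subset_span ⟨⟨i, hi⟩, rfl⟩)

def principalExponents (n : ℕ) : Finset ℤ :=
  (range ((n + 1) / 2)).image fun j : ℕ => -(n : ℤ) + 2 * j

lemma mem_principalExponents {n : ℕ} {k : ℤ} :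
    k ∈ principalExponents n ↔ -(n : ℤ) ≤ k ∧ k < 0 ∧ (k - n) % 2 = 0 := by
  simp only [principalExponents, mem_image, mem_range]
  constructor
  · rintro ⟨j, hj, rfl⟩
    omega
  · intro hk
    exact ⟨((k + n) / 2).toNat, by omega, by omega⟩

lemma card_principalExponents (n : ℕ) : (principalExponents n).card = (n + 1) / 2 := by
  rw [principalExponents, card_image_of_injective _ fun i j hij => by omega, card_range]

lemma principalPart_eq_zero_of_eigen {n : ℕ} {lam : ℂ} {a : ℤ → ℂ}
    (hbdd : ∃ N : ℤ, ∀ k < N, a k = 0) (hrec : ∀ k, indicial n k * a (k + 2) = lam * a k)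
    {k : ℤ} (hk : k ∉ principalExponents n) : (if k < 0 then a k else 0) = 0 := by
  rw [mem_principalExponents] at hk
  split_ifs with hneg
  · exact coeff_eq_zero_of_eigen hbdd hrec hneg (by tauto)
  · rfl

lemma indicial_ne_zero (n j : ℕ) : indicial n (-n + 2 * j) ≠ 0 := by
  rw [Ne, indicial_eq_zero_iff]
  omega

noncomputable def eigenCoeff (n : ℕ) (t : ℂ) (j : ℕ) : ℂ :=
  t ^ j * (∏ i ∈ range j, indicial n (-n + 2 * i))⁻¹

lemma indicial_mul_eigenCoeff_succ (n : ℕ) (t : ℂ) (j : ℕ) :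
    indicial n (-n + 2 * j) * eigenCoeff n t (j + 1) = t * eigenCoeff n t j := by
  rw [eigenCoeff, eigenCoeff, prod_range_succ, mul_inv, pow_succ]
  field_simp [indicial_ne_zero n j]

noncomputable def eigenSeq (n : ℕ) (t : ℂ) (k : ℤ) : ℂ :=
  if -(n : ℤ) ≤ k ∧ (k + n) % 2 = 0 then eigenCoeff n t ((k + n) / 2).toNat else 0

lemma eigenSeq_progression (n : ℕ) (t : ℂ) (j : ℕ) :
    eigenSeq n t (-n + 2 * j) = eigenCoeff n t j := by
  rw [eigenSeq, if_pos (by omega)]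
  congr
  omega

lemma eigenSeq_of_lt {n : ℕ} (t : ℂ) {k : ℤ} (hk : k < -n) : eigenSeq n t k = 0 :=
  if_neg (by omega)

lemma indicial_mul_eigenSeq_add_two (n : ℕ) (t : ℂ) (k : ℤ) :
    indicial n k * eigenSeq n t (k + 2) = t * eigenSeq n t k := by
  by_cases hk : -(n : ℤ) ≤ k ∧ (k + n) % 2 = 0
  · obtain ⟨j, rfl⟩ : ∃ j : ℕ, k = -n + 2 * j := ⟨((k + n) / 2).toNat, by omega⟩
    have hnext : -(n : ℤ) + 2 * j + 2 = -n + 2 * (j + 1 : ℕ) := by push_cast; ring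
    rw [hnext, eigenSeq_progression, eigenSeq_progression, indicial_mul_eigenCoeff_succ]
  · rw [show eigenSeq n t k = 0 from if_neg hk, mul_zero]
    by_cases hpole : k = -n - 2
    · rw [indicial_eq_zero_iff.2 (Or.inr hpole), zero_mul]
    · rw [show eigenSeq n t (k + 2) = 0 from if_neg (by omega), mul_zero]

theorem finrank_span_range_single {ι R : Type*} [DecidableEq ι] [Ring R] [Nontrivial R]
    [StrongRankCondition R] (s : Finset ι) :
    Module.finrank R (span R (Set.range fun i : s => (Pi.single (i : ι) (1 : R) : ι → R))) =
      s.card := by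
  rw [← Fintype.card_coe s]
  exact finrank_span_eq_card ((Pi.linearIndependent_single_one ι R).comp _ Subtype.val_injective)

def eigenPrincipalParts (n : ℕ) : Set (ℤ → ℂ) :=
  {p | ∃ (lam : ℂ) (a : ℤ → ℂ), (∃ N : ℤ, ∀ k : ℤ, k < N → a k = 0) ∧
    (∀ k : ℤ, indicial n k * a (k + 2) = lam * a k) ∧ p = fun k : ℤ => if k < 0 then a k else 0}

lemma principalPart_eigenSeq (n : ℕ) (t : ℂ) :
    (fun k : ℤ => if k < 0 then eigenSeq n t k else 0) =
      ∑ j ∈ range ((n + 1) / 2),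
        t ^ j • ((∏ i ∈ range j, indicial n (-n + 2 * i))⁻¹ • Pi.single (-n + 2 * j : ℤ) 1) := by
  rw [eq_sum_smul_single fun k => principalPart_eq_zero_of_eigen ⟨-n, fun k => eigenSeq_of_lt t⟩
    (indicial_mul_eigenSeq_add_two n t), principalExponents, sum_image fun i _ j _ h => by omega]
  refine sum_congr rfl fun j hj => ?_
  rw [mem_range] at hj
  rw [if_pos (by omega), eigenSeq_progression, eigenCoeff, smul_smul]

lemma single_mem_span_eigenPrincipalParts {n j : ℕ} (hj : j < (n + 1) / 2) :
    Pi.single (-n + 2 * j : ℤ) 1 ∈ span ℂ (eigenPrincipalParts n) := by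
  have hmem : ∀ t : ℂ, ∑ j ∈ range ((n + 1) / 2),
      t ^ j • ((∏ i ∈ range j, indicial n (-n + 2 * i))⁻¹ • Pi.single (-n + 2 * j : ℤ) 1) ∈
        span ℂ (eigenPrincipalParts n) := fun t =>
    principalPart_eigenSeq n t ▸ subset_span ⟨t, eigenSeq n t, ⟨-n, fun k => eigenSeq_of_lt t⟩,
      indicial_mul_eigenSeq_add_two n t, rfl⟩
  have hprod : (∏ i ∈ range j, indicial n (-n + 2 * i))⁻¹ ≠ 0 :=
    inv_ne_zero (prod_ne_zero_iff.2 fun i _ => indicial_ne_zero n i)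
  exact (smul_mem_iff _ hprod).1 (mem_of_forall_sum_pow_smul_mem hmem hj)

theorem span_eigenPrincipalParts (n : ℕ) :
    span ℂ (eigenPrincipalParts n) =
      span ℂ (Set.range fun k : principalExponents n => (Pi.single (k : ℤ) (1 : ℂ) : ℤ → ℂ)) := by
  apply le_antisymm
  · rw [span_le, coe_span_range_single]
    rintro _ ⟨lam, a, hbdd, hrec, rfl⟩ k hk
    exact principalPart_eq_zero_of_eigen hbdd hrec hk
  · rw [span_le]
    rintro _ ⟨⟨k, hk⟩, rfl⟩
    obtain ⟨j, hj, rfl⟩ := mem_image.1 hk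
    exact single_mem_span_eigenPrincipalParts (mem_range.1 hj)

theorem principal_parts_of_eigenfunctions_general (n : ℕ) :
    ((Submodule.span ℂ {p : ℤ → ℂ | ∃ (lam : ℂ) (a : ℤ → ℂ),
        (∃ N : ℤ, ∀ k : ℤ, k < N → a k = 0) ∧
        (∀ k : ℤ, (-(((k : ℂ) + 2) * ((k : ℂ) + 1)) + (n : ℂ) * ((n : ℂ) + 1)) * a (k + 2)
          = lam * a k) ∧
        p = fun k : ℤ => if k < 0 then a k else 0} : Set (ℤ → ℂ))
      = {p : ℤ → ℂ | ∀ k : ℤ, ¬(-(n : ℤ) ≤ k ∧ k < 0 ∧ (k - (n : ℤ)) % 2 = 0) → p k = 0})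
    ∧ Module.finrank ℂ (Submodule.span ℂ {p : ℤ → ℂ | ∃ (lam : ℂ) (a : ℤ → ℂ),
        (∃ N : ℤ, ∀ k : ℤ, k < N → a k = 0) ∧
        (∀ k : ℤ, (-(((k : ℂ) + 2) * ((k : ℂ) + 1)) + (n : ℂ) * ((n : ℂ) + 1)) * a (k + 2)
          = lam * a k) ∧
        p = fun k : ℤ => if k < 0 then a k else 0}) = (n + 1) / 2 := by
  change (span ℂ (eigenPrincipalParts n) : Set (ℤ → ℂ)) = _ ∧
    Module.finrank ℂ (span ℂ (eigenPrincipalParts n)) = _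
  rw [span_eigenPrincipalParts]
  refine ⟨?_, ?_⟩
  · simp only [coe_span_range_single, mem_principalExponents]
  · rw [finrank_span_range_single, card_principalExponents]

/-- For `L = -∂² + n(n+1)/x²`, the space spanned by the principal parts at `0` of the
meromorphic local eigenfunctions (over all `λ`, eigenfunctions encoded by their Laurent
coefficient sequences) is exactly the space of principal parts supported on
`y^{-n}, y^{-n+2}, …` (ending at `y^{-1}` for odd `n`, at `y^{-2}` for even `n`), and
its dimension is `⌈n/2⌉ = (n+1)/2`. -/
theorem principal_parts_of_eigenfunctions (n : ℕ) (hn : 0 < n) :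
    ((Submodule.span ℂ {p : ℤ → ℂ | ∃ (lam : ℂ) (a : ℤ → ℂ),
        (∃ N : ℤ, ∀ k : ℤ, k < N → a k = 0) ∧
        (∀ k : ℤ, (-(((k : ℂ) + 2) * ((k : ℂ) + 1)) + (n : ℂ) * ((n : ℂ) + 1)) * a (k + 2)
          = lam * a k) ∧
        p = fun k : ℤ => if k < 0 then a k else 0} : Set (ℤ → ℂ))
      = {p : ℤ → ℂ | ∀ k : ℤ, ¬(-(n : ℤ) ≤ k ∧ k < 0 ∧ (k - (n : ℤ)) % 2 = 0) → p k = 0})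
    ∧ Module.finrank ℂ (Submodule.span ℂ {p : ℤ → ℂ | ∃ (lam : ℂ) (a : ℤ → ℂ),
        (∃ N : ℤ, ∀ k : ℤ, k < N → a k = 0) ∧
        (∀ k : ℤ, (-(((k : ℂ) + 2) * ((k : ℂ) + 1)) + (n : ℂ) * ((n : ℂ) + 1)) * a (k + 2)
          = lam * a k) ∧
        p = fun k : ℤ => if k < 0 then a k else 0}) = (n + 1) / 2 :=
  principal_parts_of_eigenfunctions_general n
end

section
/- For any meromorphic solution f of -f'' + (n(n+1)/x²)f = λf near 0, the coefficient of x^(-n+2k+1) vanishes for all k with 0 ≤ 2k+1 ≤ 2n; equivalently f(-x) = ±f(x) up to order x^n, i.e., the Laurent series of f through order x^n contains only powers of the same parity as n. -/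
lemma parity_int_fact (m n : ℤ) (hle : m ≤ n) (hodd : Odd (m + n)) :
    m * (m - 1) ≠ n * (n + 1) := by
  intro h
  have h2 : (2*m - 2*n - 2) * (2*m + 2*n) = 0 := by nlinarith
  rcases mul_eq_zero.1 h2 with h3 | h3
  · omega
  · rcases hodd with ⟨t, ht⟩; omega

/-- For any meromorphic (Laurent-series) solution `f` of `-f'' + (n(n+1)/x²) f = λ f`
near `0`, the coefficient of `x^{-n+2k+1}` vanishes for all `k` with `0 ≤ 2k+1 ≤ 2n`:
through order `xⁿ` the Laurent series of `f` contains only powers of the same parity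
as `n`. -/
theorem parity_of_laurent_solution (n : ℕ) (hn : 0 < n) (lam : ℂ) (a : ℤ → ℂ)
    (hpp : ∃ N : ℤ, ∀ k : ℤ, k < N → a k = 0)
    (heq : ∀ k : ℤ,
      (-(((k : ℂ) + 2) * ((k : ℂ) + 1)) + (n : ℂ) * ((n : ℂ) + 1)) * a (k + 2) = lam * a k) :
    ∀ k : ℤ, 0 ≤ 2 * k + 1 → 2 * k + 1 ≤ 2 * (n : ℤ) → a (-(n : ℤ) + 2 * k + 1) = 0 := by
  obtain ⟨N, hN⟩ := hpp
  have main : ∀ j : ℕ, ∀ k : ℤ, -(n : ℤ) + 2 * k + 1 < N + 2 * j →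
      2 * k + 1 ≤ 2 * (n : ℤ) → a (-(n : ℤ) + 2 * k + 1) = 0 := by
    intro j
    induction j with
    | zero => intro k hk _; exact hN _ (by omega)
    | succ j ih =>
      intro k hk hle
      set m : ℤ := -(n : ℤ) + 2 * k + 1 with hm
      have hprev : a (m - 2) = 0 := by
        have : m - 2 = -(n : ℤ) + 2 * (k - 1) + 1 := by omega
        rw [this]
        exact ih (k - 1) (by push_cast at hk ⊢; omega) (by omega)
      have hrec := heq (m - 2)
      have hm2 : m - 2 + 2 = m := by ring
      rw [hm2, hprev, mul_zero] at hrec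
      have hcoef : (-((((m - 2 : ℤ) : ℂ) + 2) * (((m - 2 : ℤ) : ℂ) + 1)) + (n : ℂ) * ((n : ℂ) + 1))
          = ((n * (n + 1) - m * (m - 1) : ℤ) : ℂ) := by push_cast; ring
      have hne : ((n * (n + 1) - m * (m - 1) : ℤ) : ℂ) ≠ 0 := by
        rw [Int.cast_ne_zero]
        have := parity_int_fact m n (by omega) (by refine ⟨k, by omega⟩)
        omega
      rw [hcoef] at hrec
      exact (mul_eq_zero.1 hrec).resolve_left hne
  intro k hk1 hk2
  refine main ((-(n : ℤ) + 2 * k + 2 - N).toNat) k ?_ hk2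
  push_cast
  omega
end

section
/- Let f, g be functions smooth on ℝ \ {x₁,...,x_N}, meromorphic near each x_j, such that f·ḡ has zero residue at each x_j, and f·ḡ is integrable at infinity. Then the regularized pairing ⟨f,g⟩ = ∫_{⟨ℝ⟩} f(x) g(x̄)‾ dx, computed by deforming around each singularity into the upper half-plane, equals the value computed by deforming into the lower half-plane, and the pairing is Hermitian-symmetric: ⟨f,g⟩ = ⟨g,f⟩‾ when f, g take real-analytic meromorphic extensions with f(x̄) = f(x)‾. -/
open MeasureTheory ComplexConjugate

/-!
Near each pole `x_j` the product `F` is a Laurent series `∑ c_k (z - x_j)^k` with `c_{-1} = 0`.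
Its convergence at a radius between `ε` and `R` makes it converge absolutely and uniformly on the
circle of radius `ε`, so it may be integrated term by term; every `∮ (z - x_j)^k` with `k ≠ -1`
vanishes, hence so does the integral of `F` over the whole circle, and the two half-circles
`θ : π → 0` and `θ : π → 2π` carry the same integral.

For the symmetry, `F z = conj (G (conj z))`. On the real line this says `F = conj G`, and since
`x_j` is real, conjugation reflects the upper half-circle onto the lower one, which by the first
part has the same integral as the upper one.
-/

theorem summable_norm_mul_pow_of_summable_mul_pow {𝕜 : Type*} [NormedField 𝕜]
    {c : ℕ → 𝕜} {z : 𝕜} {ε : ℝ} (hε : 0 ≤ ε) (hεz : ε < ‖z‖)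
    (h : Summable fun n => c n * z ^ n) :
    Summable fun n => ‖c n‖ * ε ^ n := by
  have hz : 0 < ‖z‖ := hε.trans_lt hεz
  obtain ⟨B, hB⟩ := (h.tendsto_atTop_zero.norm.bddAbove_range : BddAbove _)
  have hgeom : Summable fun n : ℕ => B * (ε / ‖z‖) ^ n :=
    (summable_geometric_of_lt_one (by positivity) ((div_lt_one hz).2 hεz)).mul_left B
  refine hgeom.of_nonneg_of_le (fun n => by positivity) fun n => ?_
  calc ‖c n‖ * ε ^ n = ‖c n * z ^ n‖ * (ε / ‖z‖) ^ n := by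
        rw [norm_mul, norm_pow, div_pow]; field_simp
    _ ≤ B * (ε / ‖z‖) ^ n := by gcongr; exact hB ⟨n, rfl⟩

theorem summable_norm_mul_zpow_of_summable_mul_zpow {𝕜 : Type*} [NormedField 𝕜]
    [CompleteSpace 𝕜] {c : ℤ → 𝕜} {M : ℕ} (hc : ∀ k : ℤ, k < -(M : ℤ) → c k = 0) {z : 𝕜}
    {ε : ℝ} (hε : 0 ≤ ε) (hεz : ε < ‖z‖) (h : Summable fun k : ℤ => c k * z ^ k) :
    Summable fun k : ℤ => ‖c k‖ * ε ^ k := by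
  refine .of_nat_of_neg ?_ ?_
  · have hnat : Summable fun n : ℕ => c n * z ^ n := by
      simpa only [Function.comp_def, zpow_natCast] using h.comp_injective Nat.cast_injective
    simpa only [zpow_natCast] using
      summable_norm_mul_pow_of_summable_mul_pow (c := fun n : ℕ => c n) hε hεz hnat
  · refine summable_of_ne_finset_zero (s := Finset.range (M + 1)) fun n hn => ?_
    rw [hc _ (by simp at hn; omega), norm_zero, zero_mul]

section LaurentOnCircle

variable {c : ℤ → ℂ} {w : ℂ} {ε : ℝ}

theorem norm_mul_circleMap_sub_center_zpow (hε : 0 ≤ ε) (k : ℤ) (θ : ℝ) :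
    ‖c k * (circleMap w ε θ - w) ^ k‖ = ‖c k‖ * ε ^ k := by
  simp [circleMap_sub_center, norm_circleMap_zero, abs_of_nonneg hε]

theorem continuous_mul_circleMap_sub_center_zpow (hε : ε ≠ 0) (k : ℤ) :
    Continuous fun θ => c k * (circleMap w ε θ - w) ^ k :=
  continuous_const.mul <| ((continuous_circleMap w ε).sub continuous_const).zpow₀ k fun _ =>
    .inl (sub_ne_zero.2 (circleMap_ne_center hε))

theorem continuous_tsum_mul_circleMap_sub_center_zpow (hε : 0 < ε)
    (hsum : Summable fun k : ℤ => ‖c k‖ * ε ^ k) :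
    Continuous fun θ => ∑' k : ℤ, c k * (circleMap w ε θ - w) ^ k :=
  continuous_tsum (continuous_mul_circleMap_sub_center_zpow hε.ne') hsum
    fun k θ => (norm_mul_circleMap_sub_center_zpow hε.le k θ).le

theorem circleIntegral_tsum_mul_sub_zpow_eq_zero (hε : 0 < ε)
    (hsum : Summable fun k : ℤ => ‖c k‖ * ε ^ k) (hres : c (-1) = 0) :
    (∮ z in C(w, ε), ∑' k : ℤ, c k * (z - w) ^ k) = 0 := by
  have hterm : ∀ k : ℤ, (∮ z in C(w, ε), c k * (z - w) ^ k) = 0 := by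
    intro k
    rcases eq_or_ne k (-1) with rfl | hk
    · simp [hres, circleIntegral]
    · rw [circleIntegral.integral_const_mul, circleIntegral.integral_sub_zpow_of_ne hk,
        mul_zero]
  have hs : HasSum (fun k : ℤ => ∮ z in C(w, ε), c k * (z - w) ^ k)
      (∮ z in C(w, ε), ∑' k : ℤ, c k * (z - w) ^ k) := by
    refine intervalIntegral.hasSum_integral_of_dominated_convergence
      (fun k _ => ε * (‖c k‖ * ε ^ k)) (fun k => ?_) (fun k => ?_) ?_ ?_ ?_
    · simp only [deriv_circleMap]
      exact (((continuous_circleMap 0 ε).mul continuous_const).smul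
        (continuous_mul_circleMap_sub_center_zpow hε.ne' k)).aestronglyMeasurable
    · refine .of_forall fun θ _ => ?_
      rw [norm_smul, norm_mul_circleMap_sub_center_zpow hε.le]
      simp [abs_of_pos hε]
    · exact .of_forall fun _ _ => hsum.mul_left ε
    · exact intervalIntegrable_const
    · refine .of_forall fun θ _ => ((hsum.of_norm_bounded fun k =>
        (norm_mul_circleMap_sub_center_zpow hε.le k θ).le).hasSum).const_smul _
  simp only [hterm] at hs
  exact hs.unique hasSum_zero

end LaurentOnCircle

theorem intervalIntegral_upper_arc_eq_lower_arc {F : ℂ → ℂ} {w : ℂ} {ε R : ℝ} (hε : 0 < ε)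
    (hεR : ε < R) {c : ℤ → ℂ} {M : ℕ} (hc : ∀ k : ℤ, k < -(M : ℤ) → c k = 0)
    (hres : c (-1) = 0)
    (hF : ∀ z : ℂ, z ≠ w → ‖z - w‖ < R →
      (Summable fun k : ℤ => c k * (z - w) ^ k) ∧ F z = ∑' k : ℤ, c k * (z - w) ^ k) :
    (∫ θ in Real.pi..0, F (circleMap w ε θ) * (circleMap 0 ε θ * Complex.I))
      = ∫ θ in Real.pi..(2 * Real.pi),
          F (circleMap w ε θ) * (circleMap 0 ε θ * Complex.I) := by
  obtain ⟨r, hεr, hrR⟩ := exists_between hεR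
  have hr : 0 < r := hε.trans hεr
  have hsum : Summable fun k : ℤ => ‖c k‖ * ε ^ k := by
    refine summable_norm_mul_zpow_of_summable_mul_zpow hc hε.le (z := r)
      (by rwa [Complex.norm_real, Real.norm_of_nonneg hr.le]) ?_
    simpa using (hF (w + r) (by simpa using hr.ne') (by simpa [abs_of_pos hr] using hrR)).1
  have hK : (fun θ => F (circleMap w ε θ) * (circleMap 0 ε θ * Complex.I))
      = fun θ => deriv (circleMap w ε) θ • ∑' k : ℤ, c k * (circleMap w ε θ - w) ^ k := by
    funext θ
    have hθ : ‖circleMap w ε θ - w‖ < R := by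
      rwa [circleMap_sub_center, norm_circleMap_zero, abs_of_pos hε]
    rw [(hF _ (circleMap_ne_center hε.ne') hθ).2, deriv_circleMap, smul_eq_mul, mul_comm]
  have hcont : Continuous fun θ =>
      deriv (circleMap w ε) θ • ∑' k : ℤ, c k * (circleMap w ε θ - w) ^ k := by
    simp only [deriv_circleMap]
    exact ((continuous_circleMap 0 ε).mul continuous_const).smul
      (continuous_tsum_mul_circleMap_sub_center_zpow hε hsum)
  have hsplit := intervalIntegral.integral_add_adjacent_intervals
    (hcont.intervalIntegrable (μ := volume) 0 Real.pi)
    (hcont.intervalIntegrable Real.pi (2 * Real.pi))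
  have hfull : (∮ z in C(w, ε), ∑' k : ℤ, c k * (z - w) ^ k) = 0 :=
    circleIntegral_tsum_mul_sub_zpow_eq_zero hε hsum hres
  rw [hK, intervalIntegral.integral_symm]
  linear_combination -hsplit.trans hfull

theorem conj_intervalIntegral_arc {F G : ℂ → ℂ} (hFG : ∀ z, F z = conj (G (conj z)))
    (w ε a b : ℝ) :
    conj (∫ θ in a..b, G (circleMap w ε θ) * (circleMap 0 ε θ * Complex.I))
      = ∫ θ in (2 * Real.pi - a)..(2 * Real.pi - b),
          F (circleMap w ε θ) * (circleMap 0 ε θ * Complex.I) := by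
  have hpt : ∀ θ : ℝ, conj (G (circleMap w ε θ) * (circleMap 0 ε θ * Complex.I))
      = -(F (circleMap w ε (2 * Real.pi - θ))
          * (circleMap 0 ε (2 * Real.pi - θ) * Complex.I)) := by
    intro θ
    simp only [(periodic_circleMap _ _).sub_eq', hFG, map_mul, conj_circleMap, map_zero,
      Complex.conj_ofReal, Complex.conj_I, neg_neg]
    ring
  rw [← intervalIntegral.intervalIntegral_conj]
  simp only [hpt, intervalIntegral.integral_neg]
  rw [intervalIntegral.integral_symm, neg_neg]
  exact intervalIntegral.integral_comp_sub_left
    (fun θ => F (circleMap w ε θ) * (circleMap 0 ε θ * Complex.I)) _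

theorem regularized_pairing_well_defined_and_hermitian_general
    (N : ℕ) (x : Fin N → ℝ) (ε R : ℝ) (hε : 0 < ε) (hεR : ε < R)
    (f g : ℂ → ℂ)
    (F G : ℂ → ℂ)
    (hFdef : ∀ z, F z = f z * (starRingEnd ℂ) (g ((starRingEnd ℂ) z)))
    (hGdef : ∀ z, G z = g z * (starRingEnd ℂ) (f ((starRingEnd ℂ) z)))
    (hres : ∀ j : Fin N, ∃ (c : ℤ → ℂ) (M : ℕ), (∀ k : ℤ, k < -(M : ℤ) → c k = 0) ∧
      c (-1) = 0 ∧
      ∀ z : ℂ, z ≠ (x j : ℂ) → ‖z - (x j : ℂ)‖ < R →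
        (Summable fun k : ℤ => c k * (z - (x j : ℂ)) ^ k) ∧
        F z = ∑' k : ℤ, c k * (z - (x j : ℂ)) ^ k) :
    ((∫ t in {t : ℝ | ∀ j, ε ≤ |t - x j|}, F (t : ℂ))
        + ∑ j : Fin N, ∫ θ in Real.pi..0,
            F (circleMap (x j : ℂ) ε θ) * (circleMap 0 ε θ * Complex.I)
      = (∫ t in {t : ℝ | ∀ j, ε ≤ |t - x j|}, F (t : ℂ))
        + ∑ j : Fin N, ∫ θ in Real.pi..(2 * Real.pi),
            F (circleMap (x j : ℂ) ε θ) * (circleMap 0 ε θ * Complex.I))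
    ∧ ((∫ t in {t : ℝ | ∀ j, ε ≤ |t - x j|}, F (t : ℂ))
        + ∑ j : Fin N, ∫ θ in Real.pi..0,
            F (circleMap (x j : ℂ) ε θ) * (circleMap 0 ε θ * Complex.I)
      = (starRingEnd ℂ) ((∫ t in {t : ℝ | ∀ j, ε ≤ |t - x j|}, G (t : ℂ))
        + ∑ j : Fin N, ∫ θ in Real.pi..0,
            G (circleMap (x j : ℂ) ε θ) * (circleMap 0 ε θ * Complex.I))) := by
  have harc : ∀ j : Fin N, (∫ θ in Real.pi..0,
        F (circleMap (x j : ℂ) ε θ) * (circleMap 0 ε θ * Complex.I))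
      = ∫ θ in Real.pi..(2 * Real.pi),
        F (circleMap (x j : ℂ) ε θ) * (circleMap 0 ε θ * Complex.I) := fun j => by
    obtain ⟨c, M, hc, hc1, hF⟩ := hres j
    exact intervalIntegral_upper_arc_eq_lower_arc hε hεR hc hc1 hF
  have hFG : ∀ z, F z = conj (G (conj z)) := fun z => by
    rw [hFdef, hGdef, map_mul, Complex.conj_conj, Complex.conj_conj, mul_comm]
  refine ⟨by simp only [harc], ?_⟩
  rw [map_add, map_sum, ← integral_conj]
  congr 1
  · simp only [hFG, Complex.conj_ofReal]
  · refine Finset.sum_congr rfl fun j _ => ?_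
    rw [conj_intervalIntegral_arc hFG, harc j, sub_zero, two_mul, add_sub_cancel_right]

/-- Regularized indefinite inner product `⟨f,g⟩ = ∫_{⟨ℝ⟩} f(x) conj(g(x̄)) dx`:
`f, g` are smooth on `ℝ \ {x₁, …, x_N}`, meromorphic near each `x_j` (with real
symmetry `f(z̄) = conj f(z)`), the product `F(z) = f(z)·conj(g(z̄))` has zero residue
at each `x_j`, and `F` is integrable at infinity.  Then the value obtained by
deforming the real line around each singularity into the upper half-plane
(`θ : π → 0`) equals the one through the lower half-plane (`θ : π → 2π`), and the
pairing is Hermitian-symmetric: `⟨f,g⟩ = conj ⟨g,f⟩`. -/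
theorem regularized_pairing_well_defined_and_hermitian
    (N : ℕ) (x : Fin N → ℝ) (ε R : ℝ) (hε : 0 < ε) (hεR : ε < R)
    (hsep : ∀ i j : Fin N, i ≠ j → 2 * R < |x i - x j|)
    (f g : ℂ → ℂ)
    (hfa : AnalyticOnNhd ℂ f {z : ℂ | ∀ j, z ≠ (x j : ℂ)})
    (hga : AnalyticOnNhd ℂ g {z : ℂ | ∀ j, z ≠ (x j : ℂ)})
    (hfsym : ∀ z, f ((starRingEnd ℂ) z) = (starRingEnd ℂ) (f z))
    (hgsym : ∀ z, g ((starRingEnd ℂ) z) = (starRingEnd ℂ) (g z))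
    (F G : ℂ → ℂ)
    (hFdef : ∀ z, F z = f z * (starRingEnd ℂ) (g ((starRingEnd ℂ) z)))
    (hGdef : ∀ z, G z = g z * (starRingEnd ℂ) (f ((starRingEnd ℂ) z)))
    (hres : ∀ j : Fin N, ∃ (c : ℤ → ℂ) (M : ℕ), (∀ k : ℤ, k < -(M : ℤ) → c k = 0) ∧
      c (-1) = 0 ∧
      ∀ z : ℂ, z ≠ (x j : ℂ) → ‖z - (x j : ℂ)‖ < R →
        (Summable fun k : ℤ => c k * (z - (x j : ℂ)) ^ k) ∧
        F z = ∑' k : ℤ, c k * (z - (x j : ℂ)) ^ k)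
    (hint : IntegrableOn (fun t : ℝ => F (t : ℂ)) {t : ℝ | ∀ j, ε ≤ |t - x j|}) :
    ((∫ t in {t : ℝ | ∀ j, ε ≤ |t - x j|}, F (t : ℂ))
        + ∑ j : Fin N, ∫ θ in Real.pi..0,
            F (circleMap (x j : ℂ) ε θ) * (circleMap 0 ε θ * Complex.I)
      = (∫ t in {t : ℝ | ∀ j, ε ≤ |t - x j|}, F (t : ℂ))
        + ∑ j : Fin N, ∫ θ in Real.pi..(2 * Real.pi),
            F (circleMap (x j : ℂ) ε θ) * (circleMap 0 ε θ * Complex.I))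
    ∧ ((∫ t in {t : ℝ | ∀ j, ε ≤ |t - x j|}, F (t : ℂ))
        + ∑ j : Fin N, ∫ θ in Real.pi..0,
            F (circleMap (x j : ℂ) ε θ) * (circleMap 0 ε θ * Complex.I)
      = (starRingEnd ℂ) ((∫ t in {t : ℝ | ∀ j, ε ≤ |t - x j|}, G (t : ℂ))
        + ∑ j : Fin N, ∫ θ in Real.pi..0,
            G (circleMap (x j : ℂ) ε θ) * (circleMap 0 ε θ * Complex.I))) :=
  regularized_pairing_well_defined_and_hermitian_general N x ε R hε hεR f g F G hFdef hGdef hres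
end
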